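/- Let G_0 be the minimal subset of c_00(ℕ) that contains {±e_n* : n ∈ ℕ}, is closed under the operations f_1 < … < f_d ↦ (1/m_{2j}) ∑_{i=1}^{d} f_i for d ≤ n_{2j} (for each j), and contains all ∑_{i=1}^d a_i f_i with rational a_i, ∑ a_i² ≤ 1, and f_i ∈ G_0 functionals with pairwise different weights. Then for every f ∈ G_0 and every subset E ⊂ ℕ, the restriction Ef (pointwise product with the characteristic function of E) also belongs to G_0. Consequently the unit vectors (e_n) form a 1-unconditional basis of the completion 𝔛_{G_0} of (c_00(ℕ), ‖·‖_{G_0}), where ‖x‖_{G_0} = sup{|f(x)| : f ∈ G_0}. -/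

import Mathlib

open scoped Classical

/-- `m_j = 2^(8·5^(j-1))`, i.e. `m 1 = 2^8`, `m (j+1) = m j ^ 5`. -/
def mseq (j : ℕ) : ℕ := 2 ^ (8 * 5 ^ (j - 1))

/-- `n 1 = 2^7`, `n (j+1) = (2 n j) ^ (log₂ (m (j+1)^4))`, where
`log₂ (m (j+2)^4) = 32·5^(j+1)`. -/
def nseq : ℕ → ℕ
  | 0 => 2 ^ 7
  | 1 => 2 ^ 7
  | j + 2 => (2 * nseq (j + 1)) ^ (32 * 5 ^ (j + 1))

/-- `f 0 < f 1 < … < f (d-1)`: successive supports. -/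
def Succ (f : ℕ → ℕ →₀ ℝ) (d : ℕ) : Prop :=
  ∀ i k, i < k → k < d → ∀ a ∈ (f i).support, ∀ b ∈ (f k).support, a < b

/-- The norming set `G₀`: the minimal subset of `c₀₀(ℕ)` containing `±e_n*`, closed
under the `(𝒜_{n_{2j}}, 1/m_{2j})` operations, and containing all rational
`ℓ²`-combinations of functionals of `G₀` with pairwise different weights. -/
inductive G0 : (ℕ →₀ ℝ) → Prop
  | basic (k : ℕ) : G0 (Finsupp.single k 1)
  | neg (f : ℕ →₀ ℝ) : G0 f → G0 (-f)
  | even (j d : ℕ) (f : ℕ → ℕ →₀ ℝ) (hj : 1 ≤ j) (hd : d ≤ nseq (2 * j))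
      (hG : ∀ i < d, G0 (f i)) (hs : Succ f d) :
      G0 ((mseq (2 * j) : ℝ)⁻¹ • ∑ i ∈ Finset.range d, f i)
  | comb (d : ℕ) (a : ℕ → ℚ) (j : ℕ → ℕ) (d' : ℕ → ℕ) (g : ℕ → ℕ → ℕ →₀ ℝ)
      (ha : ∑ i ∈ Finset.range d, (a i) ^ 2 ≤ 1)
      (hj : ∀ i < d, 1 ≤ j i)
      (hd' : ∀ i < d, d' i ≤ nseq (2 * j i))
      (hG : ∀ i l, i < d → l < d' i → G0 (g i l))
      (hs : ∀ i < d, Succ (g i) (d' i))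
      (hinj : ∀ i k, i < d → k < d → i ≠ k → j i ≠ j k) :
      G0 (∑ i ∈ Finset.range d, (a i : ℝ) •
        ((mseq (2 * j i) : ℝ)⁻¹ • ∑ l ∈ Finset.range (d' i), g i l))

/-- The action of a functional `f` on `x` via the inner product. -/
def dotp (f x : ℕ →₀ ℝ) : ℝ := ∑ k ∈ x.support, f k * x k

/-- The norm induced by `G₀` on `c₀₀(ℕ)`. -/
noncomputable def normG0 (x : ℕ →₀ ℝ) : ℝ :=
  sSup {r : ℝ | ∃ f, G0 f ∧ r = |dotp f x|}

/-!
Restriction to `E` (`Finsupp.filter`) commutes with negation, scalar multiplication and finite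
sums and preserves successive supports, so `G₀` is closed under it by induction on `G₀`.
Since `⟨f, Ex⟩ = ⟨Ef, x⟩`, the set defining `‖Ex‖_{G₀}` is contained in the one defining
`‖x‖_{G₀}`; the latter is bounded because every `f ∈ G₀` has coordinates in `[-1, 1]`, which for
the `ℓ²`-combinations rests on the pairwise different weights: `∑ⱼ m_{2j}⁻¹ ≤ ∑_{j ≥ 1} 2^{-j} = 1`.
-/

lemma G0_zero : G0 0 := by
  simpa using G0.comb 0 (fun _ => 0) (fun _ => 1) (fun _ => 0) (fun _ _ => 0) (by simp)
    (by simp) (by simp) (by simp) (by simp) (by simp)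

lemma Succ.filter {f : ℕ → ℕ →₀ ℝ} {d : ℕ} (hs : Succ f d) (p : ℕ → Prop)
    [DecidablePred p] :
    Succ (fun i => (f i).filter p) d := by
  intro i k hik hkd a ha b hb
  rw [Finsupp.support_filter, Finset.mem_filter] at ha hb
  exact hs i k hik hkd a ha.1 b hb.1

lemma G0.filter {f : ℕ →₀ ℝ} (hf : G0 f) (p : ℕ → Prop) [DecidablePred p] :
    G0 (f.filter p) := by
  induction hf with
  | basic k =>
    by_cases h : p k
    · rw [Finsupp.filter_single_of_pos _ h]; exact G0.basic k
    · rw [Finsupp.filter_single_of_neg _ h]; exact G0_zero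
  | neg f _ ih => rw [Finsupp.filter_neg]; exact G0.neg _ ih
  | even j d f hj hd _ hs ih =>
    rw [Finsupp.filter_smul, Finsupp.filter_sum]
    exact G0.even j d _ hj hd ih (hs.filter p)
  | comb d a j d' g ha hj hd' _ hs hinj ih =>
    simp only [Finsupp.filter_sum, Finsupp.filter_smul]
    exact G0.comb d a j d' _ ha hj hd' ih (fun i hi => (hs i hi).filter p) hinj

lemma Succ.abs_sum_apply_le_one {f : ℕ → ℕ →₀ ℝ} {d : ℕ} (hs : Succ f d)
    (hf : ∀ i < d, ∀ k, |f i k| ≤ 1) (k : ℕ) : |∑ i ∈ Finset.range d, f i k| ≤ 1 := by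
  by_cases h : ∃ i < d, f i k ≠ 0
  · obtain ⟨i, hi, hik⟩ := h
    -- `k` lies in the support of `f i`, hence in no other support.
    have hother : ∀ i' < d, i' ≠ i → f i' k = 0 := by
      intro i' hi' hne
      by_contra hi'k
      rcases lt_or_gt_of_ne hne with hlt | hgt
      · exact lt_irrefl k (hs i' i hlt hi k (by simpa using hi'k) k (by simpa using hik))
      · exact lt_irrefl k (hs i i' hgt hi' k (by simpa using hik) k (by simpa using hi'k))
    rw [Finset.sum_eq_single_of_mem i (Finset.mem_range.2 hi)
      (fun i' hi' hne => hother i' (Finset.mem_range.1 hi') hne)]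
    exact hf i hi k
  · push Not at h
    rw [Finset.sum_eq_zero (fun i hi => h i (Finset.mem_range.1 hi))]
    simp

lemma inv_mseq_two_mul_le (j : ℕ) : (mseq (2 * j) : ℝ)⁻¹ ≤ (1 / 2 : ℝ) ^ j := by
  have hpow : 2 ^ j ≤ mseq (2 * j) := by
    apply Nat.pow_le_pow_right two_pos
    have := Nat.lt_pow_self (n := 2 * j - 1) (show 1 < 5 by norm_num)
    omega
  rw [one_div, inv_pow]
  exact inv_anti₀ (by positivity) (by exact_mod_cast hpow)

lemma sum_half_pow_le_one {S : Finset ℕ} (hS : ∀ t ∈ S, 1 ≤ t) :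
    ∑ t ∈ S, (1 / 2 : ℝ) ^ t ≤ 1 := by
  obtain ⟨N, hN⟩ := S.exists_nat_subset_range
  have hsub : S ⊆ Finset.Ico 1 N := fun t ht =>
    Finset.mem_Ico.2 ⟨hS t ht, Finset.mem_range.1 (hN ht)⟩
  calc ∑ t ∈ S, (1 / 2 : ℝ) ^ t
      ≤ ∑ t ∈ Finset.Ico 1 N, (1 / 2 : ℝ) ^ t :=
        Finset.sum_le_sum_of_subset_of_nonneg hsub (fun _ _ _ => by positivity)
    _ ≤ (1 / 2) ^ 1 / (1 - 1 / 2) := geom_sum_Ico_le_of_lt_one (by norm_num) (by norm_num)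
    _ = 1 := by norm_num

lemma abs_inv_mseq_smul_sum_apply_le {g : ℕ → ℕ →₀ ℝ} {d : ℕ} (j : ℕ) (hs : Succ g d)
    (hg : ∀ l < d, ∀ k, |g l k| ≤ 1) (k : ℕ) :
    |((mseq (2 * j) : ℝ)⁻¹ • ∑ l ∈ Finset.range d, g l) k| ≤ (1 / 2 : ℝ) ^ j := by
  rw [Finsupp.smul_apply, Finsupp.finsetSum_apply, smul_eq_mul, abs_mul, abs_inv,
    Nat.abs_cast]
  calc (mseq (2 * j) : ℝ)⁻¹ * |∑ l ∈ Finset.range d, g l k|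
      ≤ (1 / 2 : ℝ) ^ j * 1 :=
        mul_le_mul (inv_mseq_two_mul_le j) (hs.abs_sum_apply_le_one hg k)
          (abs_nonneg _) (by positivity)
    _ = (1 / 2 : ℝ) ^ j := mul_one _

lemma abs_le_one_of_sum_sq_le_one {s : Finset ℕ} {a : ℕ → ℚ}
    (ha : ∑ i ∈ s, a i ^ 2 ≤ 1) {i : ℕ} (hi : i ∈ s) : |(a i : ℝ)| ≤ 1 := by
  have hq : a i ^ 2 ≤ 1 :=
    (Finset.single_le_sum (fun i _ => sq_nonneg (a i)) hi).trans ha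
  exact (sq_le_one_iff_abs_le_one _).1 (by exact_mod_cast hq)

lemma G0.abs_apply_le_one {f : ℕ →₀ ℝ} (hf : G0 f) (k : ℕ) : |f k| ≤ 1 := by
  induction hf generalizing k with
  | basic n => rw [Finsupp.single_apply]; split <;> simp
  | neg f _ ih => simpa using ih k
  | even j d f _ _ _ hs ih =>
    exact (abs_inv_mseq_smul_sum_apply_le j hs ih k).trans
      (pow_le_one₀ (by norm_num) (by norm_num))
  | comb d a j d' g ha hj _ _ hs hinj ih =>
    have hterm : ∀ i ∈ Finset.range d, |((a i : ℝ) • ((mseq (2 * j i) : ℝ)⁻¹ •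
        ∑ l ∈ Finset.range (d' i), g i l)) k| ≤ (1 / 2 : ℝ) ^ j i := by
      intro i hi
      rw [Finsupp.smul_apply, smul_eq_mul, abs_mul]
      have hblock := abs_inv_mseq_smul_sum_apply_le (j i) (hs i (Finset.mem_range.1 hi))
        (ih i · (Finset.mem_range.1 hi)) k
      calc |(a i : ℝ)| * _ ≤ 1 * (1 / 2 : ℝ) ^ j i :=
            mul_le_mul (abs_le_one_of_sum_sq_le_one ha hi) hblock (abs_nonneg _) zero_le_one
        _ = _ := one_mul _
    have hjinj : Set.InjOn j (Finset.range d) := fun x hx y hy hxy => by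
      by_contra hne
      exact hinj x y (Finset.mem_range.1 hx) (Finset.mem_range.1 hy) hne hxy
    -- The weights `m_{2j}` are pairwise different, so the bounds `2^{-j}` sum to at most `1`.
    calc |(∑ i ∈ Finset.range d, (a i : ℝ) • ((mseq (2 * j i) : ℝ)⁻¹ •
          ∑ l ∈ Finset.range (d' i), g i l)) k|
        ≤ ∑ i ∈ Finset.range d, (1 / 2 : ℝ) ^ j i := by
          rw [Finsupp.finsetSum_apply]
          exact (Finset.abs_sum_le_sum_abs _ _).trans (Finset.sum_le_sum hterm)
      _ = ∑ t ∈ (Finset.range d).image j, (1 / 2 : ℝ) ^ t := (Finset.sum_image hjinj).symm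
      _ ≤ 1 := sum_half_pow_le_one (by
          simp only [Finset.mem_image, Finset.mem_range]
          rintro t ⟨i, hi, rfl⟩
          exact hj i hi)

lemma dotp_filter_right (f x : ℕ →₀ ℝ) (p : ℕ → Prop) [DecidablePred p] :
    dotp f (x.filter p) = dotp (f.filter p) x := by
  unfold dotp
  rw [Finsupp.support_filter, Finset.sum_filter]
  refine Finset.sum_congr rfl fun k _ => ?_
  by_cases h : p k <;> simp [h]

lemma abs_dotp_le {f : ℕ →₀ ℝ} (hf : ∀ k, |f k| ≤ 1) (x : ℕ →₀ ℝ) :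
    |dotp f x| ≤ ∑ k ∈ x.support, |x k| := by
  refine (Finset.abs_sum_le_sum_abs _ _).trans (Finset.sum_le_sum fun k _ => ?_)
  rw [abs_mul]
  exact mul_le_of_le_one_left (abs_nonneg _) (hf k)

lemma normG0_filter_le (x : ℕ →₀ ℝ) (p : ℕ → Prop) [DecidablePred p] :
    normG0 (x.filter p) ≤ normG0 x := by
  have hbdd : BddAbove {r : ℝ | ∃ f, G0 f ∧ r = |dotp f x|} := by
    refine ⟨∑ k ∈ x.support, |x k|, ?_⟩
    rintro r ⟨f, hf, rfl⟩
    exact abs_dotp_le hf.abs_apply_le_one x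
  refine csSup_le_csSup hbdd ⟨_, 0, G0_zero, rfl⟩ ?_
  rintro r ⟨f, hf, rfl⟩
  exact ⟨f.filter p, hf.filter p, by rw [dotp_filter_right]⟩

/-- `G₀` is closed under restriction to arbitrary subsets `E ⊂ ℕ`;
consequently the unit vectors form a 1-unconditional basis of the completion
`𝔛_{G₀}` of `(c₀₀(ℕ), ‖·‖_{G₀})`, i.e. `‖Ex‖_{G₀} ≤ ‖x‖_{G₀}` for all `E` and `x`. -/
theorem G0_restriction_closed_and_unconditional :
    (∀ f : ℕ →₀ ℝ, G0 f → ∀ (E : Set ℕ) (g : ℕ →₀ ℝ),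
      (∀ k, g k = if k ∈ E then f k else 0) → G0 g) ∧
    (∀ (x : ℕ →₀ ℝ) (E : Set ℕ) (y : ℕ →₀ ℝ),
      (∀ k, y k = if k ∈ E then x k else 0) → normG0 y ≤ normG0 x) := by
  constructor
  · intro f hf E g hg
    obtain rfl : g = f.filter (· ∈ E) := Finsupp.ext fun k => by rw [hg, Finsupp.filter_apply]
    exact hf.filter _
  · intro x E y hy
    obtain rfl : y = x.filter (· ∈ E) := Finsupp.ext fun k => by rw [hy, Finsupp.filter_apply]
    exact normG0_filter_le x _
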